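/- Let δ ∈ (0,1) and let σ be an infinite sequence over {L,R}. Let (a_{i,j}), for i ≥ 1 and j ∈ {1,…,i}, be a strictly increasing (in lexicographic order of (i,j)) unbounded family of positive integers, where a_{i,i+1} is read as a_{i+1,1}. If limsup_{T→∞} dens(σ^T) ≤ 1/2 − δ, then there is an infinite sequence of pairs (i_n,j_n) such that dens(σ, a_{i_n,j_n}+1, a_{i_n,j_n+1}) ≤ 1/2 − δ/4 for all n. -/
import Mathlib


noncomputable section

namespace Paper

/-- The two actions of each player in the Big Match. -/
inductive Act
  | L
  | R
deriving DecidableEq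

/-- The density `dens(σ, a+1, b)` of the action `L` among the rounds
`a+1, …, b` of the sequence `σ` (rounds are 0-indexed, so these are the entries
`σ a, …, σ (b-1)`). -/
def densBetween (σ : ℕ → Act) (a b : ℕ) : ℝ :=
  (((Finset.Ico a b).filter fun t => σ t = Act.L).card : ℝ) / ((b : ℝ) - a)

/-- The density of the action `L` in the first `T` terms of `σ`. -/
def dens (σ : ℕ → Act) (T : ℕ) : ℝ := densBetween σ 0 T

/-- Number of `L`s among rounds `a, …, b-1`, as a real number. -/
def countL (σ : ℕ → Act) (a b : ℕ) : ℝ :=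
  (((Finset.Ico a b).filter fun t => σ t = Act.L).card : ℝ)

lemma countL_nonneg (σ : ℕ → Act) (a b : ℕ) : 0 ≤ countL σ a b :=
  Nat.cast_nonneg _

lemma densBetween_eq (σ : ℕ → Act) (a b : ℕ) :
    densBetween σ a b = countL σ a b / ((b : ℝ) - a) := rfl

lemma countL_add (σ : ℕ → Act) {a b c : ℕ} (hab : a ≤ b) (hbc : b ≤ c) :
    countL σ a b + countL σ b c = countL σ a c := by
  unfold countL
  rw [← Nat.cast_add]
  congr 1
  rw [← Finset.card_union_of_disjoint
    (Finset.disjoint_filter_filter (Finset.Ico_disjoint_Ico_consecutive a b c)),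
    ← Finset.filter_union, Finset.Ico_union_Ico_eq_Ico hab hbc]

lemma dens_le_one (σ : ℕ → Act) (T : ℕ) : dens σ T ≤ 1 := by
  unfold dens densBetween
  rcases Nat.eq_zero_or_pos T with h | h
  · simp [h]
  · rw [Nat.cast_zero, sub_zero, div_le_one (by exact_mod_cast h)]
    exact_mod_cast (Finset.card_filter_le _ _).trans (by simp)

/-- Enumeration of the pairs `(i,j)`, `1 ≤ j ≤ i`, in lexicographic order. -/
def enum : ℕ → ℕ × ℕ
  | 0 => (1, 1)
  | n + 1 => if (enum n).2 < (enum n).1 then ((enum n).1, (enum n).2 + 1)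
      else ((enum n).1 + 1, 1)

lemma enum_valid : ∀ n, 1 ≤ (enum n).2 ∧ (enum n).2 ≤ (enum n).1 := by
  intro n
  induction n with
  | zero => exact ⟨le_refl 1, le_refl 1⟩
  | succ n ih =>
    show (1 ≤ (enum (n+1)).2 ∧ (enum (n+1)).2 ≤ (enum (n+1)).1)
    rw [enum]
    by_cases h : (enum n).2 < (enum n).1 <;> simp [h] <;> omega

lemma enum_lex_succ (n : ℕ) :
    (enum n).1 < (enum (n+1)).1 ∨
      ((enum n).1 = (enum (n+1)).1 ∧ (enum n).2 < (enum (n+1)).2) := by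
  rw [enum]
  by_cases h : (enum n).2 < (enum n).1 <;> simp [h]

lemma enum_lex : ∀ {m n : ℕ}, m < n →
    (enum m).1 < (enum n).1 ∨
      ((enum m).1 = (enum n).1 ∧ (enum m).2 < (enum n).2) := by
  intro m n h
  induction n with
  | zero => omega
  | succ n ih =>
    rcases Nat.lt_succ_iff_lt_or_eq.mp h with h' | h'
    · have h1 := ih h'
      have h2 := enum_lex_succ n
      rcases h1 with h1 | ⟨h1, h1'⟩ <;> rcases h2 with h2 | ⟨h2, h2'⟩ <;> omega
    · subst h'
      exact enum_lex_succ m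

/-- Let `δ ∈ (0,1)`, let `σ` be an infinite sequence over
`{L,R}`, and let `a i j` (for `1 ≤ j ≤ i`) be a family of positive integers
which is strictly increasing and unbounded in the lexicographic order of
`(i,j)`, where `a i (i+1)` is read as `a (i+1) 1`.  If
`limsup_{T→∞} dens(σ^T) ≤ 1/2 - δ`, then there is an infinite (lexicographically
strictly increasing) sequence of pairs `(i_n, j_n)` with `1 ≤ j_n ≤ i_n` such
that `dens(σ, a i_n j_n + 1, a i_n (j_n + 1)) ≤ 1/2 - δ/4` for all `n`. -/
theorem stmt10 (δ : ℝ) (hδ : δ ∈ Set.Ioo (0 : ℝ) 1) (σ : ℕ → Act)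
    (a : ℕ → ℕ → ℕ)
    (ha_pos : ∀ i j, 1 ≤ j → j ≤ i → 0 < a i j)
    (ha_mono : ∀ i j, 1 ≤ j → j < i → a i j < a i (j + 1))
    (ha_mono' : ∀ i, 1 ≤ i → a i i < a (i + 1) 1)
    (ha_unb : ∀ N, ∃ i j, 1 ≤ j ∧ j ≤ i ∧ N < a i j)
    (hlimsup : Filter.limsup (fun T => dens σ T) Filter.atTop ≤ 1 / 2 - δ) :
    ∃ ij : ℕ → ℕ × ℕ,
      (∀ n, 1 ≤ (ij n).2 ∧ (ij n).2 ≤ (ij n).1) ∧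
      (∀ n, (ij n).1 < (ij (n + 1)).1 ∨
        ((ij n).1 = (ij (n + 1)).1 ∧ (ij n).2 < (ij (n + 1)).2)) ∧
      (∀ n, densBetween σ (a (ij n).1 (ij n).2)
          (if (ij n).2 < (ij n).1 then a (ij n).1 ((ij n).2 + 1)
           else a ((ij n).1 + 1) 1) ≤ 1 / 2 - δ / 4) := by
  obtain ⟨hδ0, hδ1⟩ := hδ
  classical
  set b : ℕ → ℕ := fun n => a (enum n).1 (enum n).2 with hb
  have hbsucc : ∀ n, b n < b (n + 1) := by
    intro n
    obtain ⟨h1, h2⟩ := enum_valid n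
    rw [hb]
    show a (enum n).1 (enum n).2 < a (enum (n+1)).1 (enum (n+1)).2
    rw [enum]
    by_cases h : (enum n).2 < (enum n).1
    · simpa [h] using ha_mono (enum n).1 (enum n).2 h1 h
    · have hji : (enum n).2 = (enum n).1 := le_antisymm h2 (not_lt.mp h)
      simp only [h, if_false]
      rw [hji]
      exact ha_mono' (enum n).1 (h1.trans h2)
  have hbmono : StrictMono b := strictMono_nat_of_lt_succ hbsucc
  have hble : ∀ n : ℕ, n ≤ b n := fun n => hbmono.le_apply
  have hnext : ∀ t, (if (enum t).2 < (enum t).1 then a (enum t).1 ((enum t).2 + 1)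
      else a ((enum t).1 + 1) 1) = b (t + 1) := by
    intro t
    rw [hb]
    show _ = a (enum (t+1)).1 (enum (t+1)).2
    rw [enum]
    by_cases h : (enum t).2 < (enum t).1 <;> simp [h]
  -- key step: infinitely many blocks have low density
  have hkey : ∀ m, ∃ n, m ≤ n ∧ densBetween σ (b n) (b (n + 1)) ≤ 1 / 2 - δ / 4 := by
    intro m
    by_contra hcon
    push_neg at hcon
    have hblock : ∀ n, m ≤ n →
        (1 / 2 - δ / 4) * ((b (n + 1) : ℝ) - b n) ≤ countL σ (b n) (b (n + 1)) := by
      intro n hn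
      have hd : (0 : ℝ) < (b (n + 1) : ℝ) - b n := by
        have := hbsucc n
        have : (b n : ℝ) < b (n + 1) := by exact_mod_cast this
        linarith
      have := hcon n hn
      rw [densBetween_eq, lt_div_iff₀ hd] at this
      exact this.le
    have hsum : ∀ n, m ≤ n →
        (1 / 2 - δ / 4) * ((b n : ℝ) - b m) ≤ countL σ (b m) (b n) := by
      intro n hn
      induction n, hn using Nat.le_induction with
      | base => simpa using countL_nonneg σ (b m) (b m)
      | succ n hn ih =>
        have hmn : b m ≤ b n := hbmono.monotone hn
        have h1 := hblock n hn
        have h2 := countL_add σ hmn (hbsucc n).le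
        rw [← h2]
        have : ((b (n+1) : ℝ) - b m) = ((b n : ℝ) - b m) + ((b (n+1) : ℝ) - b n) := by ring
        rw [this, mul_add]
        linarith
    -- eventually dens < 1/2 - δ/2
    have hbdd : Filter.IsBoundedUnder (· ≤ ·) Filter.atTop (fun T => dens σ T) :=
      Filter.isBoundedUnder_of ⟨1, fun T => dens_le_one σ T⟩
    have hev : ∀ᶠ T in Filter.atTop, dens σ T < 1 / 2 - δ / 2 :=
      Filter.eventually_lt_of_limsup_lt (lt_of_le_of_lt hlimsup (by linarith)) hbdd
    obtain ⟨T0, hT0⟩ := Filter.eventually_atTop.mp hev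
    obtain ⟨K, hK⟩ := exists_nat_gt (2 * (b m : ℝ) / δ)
    set n := max m (max T0 K) with hn
    have hnm : m ≤ n := le_max_left _ _
    have hbnT0 : T0 ≤ b n := le_trans (le_trans (le_max_left T0 K) (le_max_right m _)) (hble n)
    have hbnK : (K : ℝ) ≤ (b n : ℝ) := by
      exact_mod_cast le_trans (le_trans (le_max_right T0 K) (le_max_right m _)) (hble n)
    have hbn_big : 2 * (b m : ℝ) / δ < (b n : ℝ) := lt_of_lt_of_le hK hbnK
    have hbn_pos : (0 : ℝ) < (b n : ℝ) := by
      have : (0 : ℝ) ≤ 2 * (b m : ℝ) / δ := by positivity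
      linarith
    have hδbn : 2 * (b m : ℝ) < δ * (b n : ℝ) := by
      rw [div_lt_iff₀ hδ0] at hbn_big
      linarith
    have hdn := hT0 (b n) hbnT0
    have hdens_eq : dens σ (b n) = countL σ 0 (b n) / (b n : ℝ) := by
      unfold dens
      rw [densBetween_eq]
      norm_num
    rw [hdens_eq, div_lt_iff₀ hbn_pos] at hdn
    have hmono : countL σ (b m) (b n) ≤ countL σ 0 (b n) := by
      rw [← countL_add σ (Nat.zero_le (b m)) (hbmono.monotone hnm)]
      have := countL_nonneg σ 0 (b m)
      linarith
    have hsumn := hsum n hnm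
    have hbm_nonneg : (0 : ℝ) ≤ (b m : ℝ) := Nat.cast_nonneg _
    nlinarith [mul_nonneg hδ0.le hbm_nonneg]
  -- construct the sequence
  choose F hFle hFdens using hkey
  set g : ℕ → ℕ := fun k => Nat.rec (F 0) (fun _ gk => F (gk + 1)) k with hg
  have hg0 : g 0 = F 0 := rfl
  have hgs : ∀ k, g (k + 1) = F (g k + 1) := fun k => rfl
  have hglt : ∀ k, g k < g (k + 1) := by
    intro k
    rw [hgs k]
    exact lt_of_lt_of_le (Nat.lt_succ_self _) (hFle (g k + 1))
  have hgdens : ∀ k, densBetween σ (b (g k)) (b (g k + 1)) ≤ 1 / 2 - δ / 4 := by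
    intro k
    cases k with
    | zero => exact hFdens 0
    | succ k => rw [hgs k]; exact hFdens (g k + 1)
  refine ⟨fun k => enum (g k), fun k => enum_valid (g k), fun k => enum_lex (hglt k), ?_⟩
  intro k
  rw [hnext (g k)]
  exact hgdens k

end Paper
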